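/- arXiv:1805.11980 — 7 statements merged into one kernel-verified Lean document; each statement's English description precedes it below -/
import Mathlib

section
/- Let A = σ(R)⟨x_1,…,x_n⟩ be a skew PBW extension of a ring R. For every α = (α_1,…,α_n) ∈ ℕ^n and every r ∈ R, the following identity holds in A: x^α·r = σ_1^{α_1}(σ_2^{α_2}(⋯(σ_n^{α_n}(r))))·x_1^{α_1}⋯x_n^{α_n} + Σ_{k=1}^{n} x_1^{α_1}⋯x_{k-1}^{α_{k-1}}·( Σ_{j=1}^{α_k} x_k^{α_k−j}·δ_k(σ_k^{j−1}(σ_{k+1}^{α_{k+1}}(⋯(σ_n^{α_n}(r)))))·x_k^{j−1} )·x_{k+1}^{α_{k+1}}⋯x_n^{α_n}. -/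
open scoped BigOperators

/-- Iterated "power composition": given a family of maps `f i` and multiplicities `k i`,
`iterPow f k = (f 0)^[k 0] ∘ (f 1)^[k 1] ∘ ⋯ ∘ (f (n-1))^[k (n-1)]`.
For a family of endomorphisms `σ` this is `σ^α = σ₁^{α₁} ∘ ⋯ ∘ σₙ^{αₙ}`. -/
def iterPow {α : Type*} {n : ℕ} (f : Fin n → α → α) (k : Fin n → ℕ) : α → α :=
  (((List.finRange n).map fun i => (f i)^[k i]).foldr (· ∘ ·) id)

/-- A skew PBW extension `A = σ(R)⟨x₁,…,xₙ⟩` of a ring `R`. -/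
structure SkewPBW (R A : Type*) [Ring R] [Ring A] (n : ℕ) where
  /-- the inclusion `R ⊆ A` (a ring embedding) -/
  ι : R →+* A
  ι_inj : Function.Injective ι
  /-- the variables `x₁,…,xₙ` -/
  x : Fin n → A
  /-- `A` is a free left `R`-module with basis the standard monomials
  `x^α = x₁^{α₁} ⋯ xₙ^{αₙ}`: every element of `A` is a unique finite
  `R`-linear combination of standard monomials. -/
  free : Function.Bijective
    (fun c : (Fin n → ℕ) →₀ R =>
      c.sum fun α r => ι r * (((List.finRange n).map fun i => x i ^ α i).prod))
  /-- condition (iii): for each `i` and each nonzero `r ∈ R` there is a nonzero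
  `c_{i,r} ∈ R` with `xᵢ r − c_{i,r} xᵢ ∈ R` -/
  lin : ∀ (i : Fin n) (r : R), r ≠ 0 → ∃ cr : R, cr ≠ 0 ∧
    ∃ r' : R, x i * ι r - ι cr * x i = ι r'
  /-- the constants `c_{i,j}` of condition (iv) -/
  c : Fin n → Fin n → R
  c_ne : ∀ i j, c i j ≠ 0
  /-- condition (iv): `xⱼ xᵢ − c_{i,j} xᵢ xⱼ ∈ R + R x₁ + ⋯ + R xₙ` -/
  quad : ∀ i j, ∃ (r₀ : R) (r : Fin n → R),
    x j * x i - ι (c i j) * (x i * x j) = ι r₀ + ∑ k, ι (r k) * x k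
  /-- the injective endomorphisms `σᵢ` -/
  σ : Fin n → R →+* R
  σ_inj : ∀ i, Function.Injective (σ i)
  /-- the `σᵢ`-derivations `δᵢ` -/
  δ : Fin n → R → R
  δ_add : ∀ (i : Fin n) (a b : R), δ i (a + b) = δ i a + δ i b
  δ_leibniz : ∀ (i : Fin n) (a b : R), δ i (a * b) = σ i a * δ i b + δ i a * b
  /-- the fundamental relation `xᵢ r = σᵢ(r) xᵢ + δᵢ(r)` -/
  comm : ∀ (i : Fin n) (r : R), x i * ι r = ι (σ i r) * x i + ι (δ i r)

namespace SkewPBW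

variable {R A : Type*} [Ring R] [Ring A] {n : ℕ}

/-- The standard monomial `x^α = x₁^{α₁} ⋯ xₙ^{αₙ}`. -/
def mono (S : SkewPBW R A n) (α : Fin n → ℕ) : A :=
  ((List.finRange n).map fun i => S.x i ^ α i).prod

/-- `σ^α = σ₁^{α₁} ∘ ⋯ ∘ σₙ^{αₙ}`. -/
def sigmaPow (S : SkewPBW R A n) (α : Fin n → ℕ) : R → R :=
  iterPow (fun i => ⇑(S.σ i)) α

/-- `δ^α = δ₁^{α₁} ∘ ⋯ ∘ δₙ^{αₙ}`. -/
def deltaPow (S : SkewPBW R A n) (α : Fin n → ℕ) : R → R :=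
  iterPow S.δ α

/-- `R` is `Σ`-compatible: `a σ^α(b) = 0 ↔ a b = 0`. -/
def SigmaCompatible (S : SkewPBW R A n) : Prop :=
  ∀ (a b : R) (α : Fin n → ℕ), a * S.sigmaPow α b = 0 ↔ a * b = 0

/-- `R` is `Δ`-compatible: `a b = 0 → a δ^β(b) = 0`. -/
def DeltaCompatible (S : SkewPBW R A n) : Prop :=
  ∀ a b : R, a * b = 0 → ∀ β : Fin n → ℕ, a * S.deltaPow β b = 0

/-- `R` is `(Σ,Δ)`-compatible. -/
def SigmaDeltaCompatible (S : SkewPBW R A n) : Prop :=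
  S.SigmaCompatible ∧ S.DeltaCompatible

/-- The elements `c_{i,j}` of condition (iv) are central in `R`. -/
def CCentral (S : SkewPBW R A n) : Prop :=
  ∀ (i j : Fin n) (r : R), S.c i j * r = r * S.c i j

/-- `R` is `(Σ,Δ)`-skew Armendariz with respect to `A`:
if `fg = 0` then `aᵢXᵢ · bⱼYⱼ = 0` for all coefficients/monomials of `f` and `g`. -/
def SDSkewArmendariz (S : SkewPBW R A n) : Prop :=
  ∀ (t s : ℕ) (a : Fin (t + 1) → R) (X : Fin (t + 1) → Fin n → ℕ)
    (b : Fin (s + 1) → R) (Y : Fin (s + 1) → Fin n → ℕ),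
    Function.Injective X → Function.Injective Y →
    (∑ i, S.ι (a i) * S.mono (X i)) * (∑ j, S.ι (b j) * S.mono (Y j)) = 0 →
    ∀ i j, (S.ι (a i) * S.mono (X i)) * (S.ι (b j) * S.mono (Y j)) = 0

/-- `R` is `Σ`-skew Armendariz with respect to `A`:
if `fg = 0` then `aᵢ σ^{αᵢ}(bⱼ) = 0` where `αᵢ = exp(Xᵢ)`. -/
def SigmaSkewArmendariz (S : SkewPBW R A n) : Prop :=
  ∀ (m t : ℕ) (a : Fin (m + 1) → R) (X : Fin (m + 1) → Fin n → ℕ)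
    (b : Fin (t + 1) → R) (Y : Fin (t + 1) → Fin n → ℕ),
    Function.Injective X → Function.Injective Y →
    (∑ i, S.ι (a i) * S.mono (X i)) * (∑ j, S.ι (b j) * S.mono (Y j)) = 0 →
    ∀ i j, a i * S.sigmaPow (X i) (b j) = 0

/-- `R` is skew `Π`-Armendariz with respect to `A`:
if `fg` is nilpotent in `A`, then `aᵢ bⱼ` is nilpotent in `R` for all `i, j`. -/
def SkewPiArmendariz (S : SkewPBW R A n) : Prop :=
  ∀ (m t : ℕ) (a : Fin (m + 1) → R) (X : Fin (m + 1) → Fin n → ℕ)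
    (b : Fin (t + 1) → R) (Y : Fin (t + 1) → Fin n → ℕ),
    Function.Injective X → Function.Injective Y →
    IsNilpotent ((∑ i, S.ι (a i) * S.mono (X i)) * (∑ j, S.ι (b j) * S.mono (Y j))) →
    ∀ i j, IsNilpotent (a i * b j)

end SkewPBW

/-- A ring is reversible if `a b = 0` implies `b a = 0`. -/
def IsReversible (R : Type*) [Ring R] : Prop :=
  ∀ a b : R, a * b = 0 → b * a = 0

/-! Iterating `x r = σ(r) x + δ(r)` gives `x^m r = σ^m(r) x^m + Σⱼ x^(m-1-j) δ(σ^j r) x^j`.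
The scalar `r` is then pushed through the factors `xₖ^αₖ` of `x^α` from right to left: each
factor twists what passes it by `σₖ^αₖ` and leaves a correction term behind, sitting between the
factors to its left and those to its right. -/

theorem pow_mul_of_twisted_comm {R A : Type*} [Semiring A] {ι : R → A} {σ δ : R → R} {x : A}
    (h : ∀ r, x * ι r = ι (σ r) * x + ι (δ r)) (m : ℕ) (r : R) :
    x ^ m * ι r = ι (σ^[m] r) * x ^ m +
      ∑ j ∈ Finset.range m, x ^ (m - (j + 1)) * ι (δ (σ^[j] r)) * x ^ j := by
  induction m with
  | zero => simp
  | succ m ih =>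
    have shift : ∀ j ∈ Finset.range m,
        x * (x ^ (m - (j + 1)) * ι (δ (σ^[j] r)) * x ^ j) =
          x ^ (m + 1 - (j + 1)) * ι (δ (σ^[j] r)) * x ^ j := by
      intro j hj
      rw [Nat.sub_add_comm (Finset.mem_range.mp hj), pow_succ', mul_assoc, mul_assoc,
        mul_assoc]
    rw [pow_succ', mul_assoc, ih, mul_add, ← mul_assoc, h, Finset.mul_sum,
      Finset.sum_congr rfl shift, Finset.sum_range_succ, Nat.sub_self, pow_zero, one_mul,
      Function.iterate_succ_apply', add_mul]
    simp only [mul_assoc]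
    abel

theorem list_prod_mul_of_twisted_comm {R A ι : Type*} [Semiring A] {f : R → A}
    (y : ι → A) (τ : ι → R → R) (D : ι → R → A)
    (h : ∀ i s, y i * f s = f (τ i s) * y i + D i s) (L : List ι) (r : R) :
    (L.map y).prod * f r = f ((L.map τ).foldr (· ∘ ·) id r) * (L.map y).prod +
      ∑ k : Fin L.length, ((L.take k).map y).prod *
        D L[k] (((L.drop (k + 1)).map τ).foldr (· ∘ ·) id r) *
        ((L.drop (k + 1)).map y).prod := by
  induction L with
  | nil => simp
  | cons i L ih =>
    rw [List.map_cons, List.prod_cons, mul_assoc, ih, mul_add, ← mul_assoc, h]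
    simp only [List.length_cons, Fin.sum_univ_succ, Fin.val_zero, Fin.val_succ, List.take_zero,
      List.take_succ_cons, List.drop_succ_cons, List.drop_zero, List.map_cons, List.map_nil,
      List.prod_cons, List.prod_nil, List.foldr_cons, Function.comp_apply, one_mul,
      Finset.mul_sum, mul_assoc, add_mul]
    abel

/-- In a skew PBW extension `A = σ(R)⟨x₁,…,xₙ⟩`, for every
`α ∈ ℕⁿ` and `r ∈ R`:
`x^α r = σ₁^{α₁}(⋯(σₙ^{αₙ}(r))) x₁^{α₁}⋯xₙ^{αₙ}
 + Σ_{k=1}^n x₁^{α₁}⋯x_{k-1}^{α_{k-1}} (Σ_{j=1}^{αₖ} xₖ^{αₖ-j} δₖ(σₖ^{j-1}(σ_{k+1}^{α_{k+1}}(⋯(σₙ^{αₙ}(r))))) xₖ^{j-1}) x_{k+1}^{α_{k+1}}⋯xₙ^{αₙ}`. -/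
theorem skewPBW_mono_mul_coeff {R A : Type*} [Ring R] [Ring A] {n : ℕ}
    (S : SkewPBW R A n) (α : Fin n → ℕ) (r : R) :
    S.mono α * S.ι r =
      S.ι (S.sigmaPow α r) * S.mono α +
      ∑ k : Fin n,
        (((List.finRange n).take k.val).map fun i => S.x i ^ α i).prod *
          (∑ j ∈ Finset.range (α k),
            S.x k ^ (α k - (j + 1)) *
              S.ι (S.δ k ((⇑(S.σ k))^[j]
                (((((List.finRange n).drop (k.val + 1)).map
                    fun i => (⇑(S.σ i))^[α i]).foldr (· ∘ ·) id) r))) *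
              S.x k ^ j) *
          (((List.finRange n).drop (k.val + 1)).map fun i => S.x i ^ α i).prod := by
  rw [SkewPBW.mono, SkewPBW.sigmaPow, iterPow, list_prod_mul_of_twisted_comm _ _ _
    (fun i => pow_mul_of_twisted_comm (S.comm i) (α i)) (List.finRange n) r]
  congr 1
  exact Fintype.sum_equiv (finCongr List.length_finRange) _ _ fun k => by simp
end

section
/- Let A = σ(R)⟨x_1,…,x_n⟩ be a skew PBW extension of a reversible and (Σ,Δ)-compatible ring R, and assume the elements c_{i,j} of condition (iv) are central in R. If f = a_0 + a_1X_1 + ⋯ + a_mX_m ∈ A has all its coefficients a_i nilpotent in R, and k is a positive integer with a_i^k = 0 for every 0 ≤ i ≤ m, then f^{(m+1)k+1} = 0 in A. -/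
open scoped BigOperators

/-! Expanding `f ^ N` and moving every `xᵢ` to the right with `xᵢ r = σᵢ(r) xᵢ + δᵢ(r)` writes
`f ^ N` as a sum of terms `b₁ ⋯ b_N W`, where `W` is a word in the `xᵢ` and, for some word
`i₁ ⋯ i_N`, each `bₜ` is obtained from `a_{iₜ}` by applying `σ`s and `δ`s. For `N = (m+1)k+1`
some index `i` occurs more than `k` times. By compatibility `u a = 0` implies `u b = 0` for every
such `b` obtained from `a`, and reversibility lets factors be inserted into a zero product, so each
occurrence can be traded for a factor `aᵢ`, and `aᵢ ^ k = 0` kills the product. -/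

open scoped Pointwise

theorem iterPow_single {α : Type*} {n : ℕ} (f : Fin n → α → α) (i : Fin n) :
    iterPow f (Pi.single i 1) = f i := by
  have key : ∀ L : List (Fin n), L.Nodup →
      (L.map fun j => (f j)^[(Pi.single i 1 : Fin n → ℕ) j]).foldr (· ∘ ·) id =
        if i ∈ L then f i else id := by
    intro L hL
    induction L with
    | nil => simp
    | cons j L ih =>
      obtain ⟨hjL, hL⟩ := List.nodup_cons.1 hL
      rcases eq_or_ne j i with rfl | hji
      · simp [ih hL, hjL]
      · simp [ih hL, hji.symm]
  simpa [iterPow] using key _ (List.nodup_finRange n)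

theorem IsReversible.mul_mul_eq_zero {R : Type*} [Ring R] (hR : IsReversible R) {a b : R}
    (h : a * b = 0) (r : R) : a * r * b = 0 :=
  hR _ _ (by rw [← mul_assoc, hR _ _ h, zero_mul])

theorem List.exists_lt_count_of_card_mul_lt_length {ι : Type*} [Fintype ι] [DecidableEq ι]
    (l : List ι) {k : ℕ} (hl : Fintype.card ι * k < l.length) : ∃ i, k < l.count i := by
  have hsum : ∑ i, l.count i = l.length := by
    simpa using Multiset.sum_count_eq_card (s := Finset.univ) (m := (l : Multiset ι))
      (fun a _ => Finset.mem_univ a)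
  obtain ⟨i, -, hi⟩ := Finset.exists_lt_of_sum_lt (s := Finset.univ) (f := fun _ => k)
    (g := fun i => l.count i) (by simpa [hsum, mul_comm] using hl)
  exact ⟨i, hi⟩

namespace SkewPBW

variable {R A : Type*} [Ring R] [Ring A] {n : ℕ} (S : SkewPBW R A n)

def orbit (a : R) : Set R :=
  {b | Relation.ReflTransGen (fun c d => ∃ i, d = S.σ i c ∨ d = S.δ i c) a b}

theorem mem_orbit_self (a : R) : a ∈ S.orbit a := Relation.ReflTransGen.refl

theorem σ_mem_orbit {a b : R} (hb : b ∈ S.orbit a) (i : Fin n) : S.σ i b ∈ S.orbit a := by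
  simp only [orbit, Set.mem_ofPred_eq] at hb ⊢
  exact hb.tail ⟨i, Or.inl rfl⟩

theorem δ_mem_orbit {a b : R} (hb : b ∈ S.orbit a) (i : Fin n) : S.δ i b ∈ S.orbit a := by
  simp only [orbit, Set.mem_ofPred_eq] at hb ⊢
  exact hb.tail ⟨i, Or.inr rfl⟩

def words : Submonoid A := Submonoid.closure (Set.range S.x)

theorem x_mem_words (i : Fin n) : S.x i ∈ S.words :=
  Submonoid.subset_closure (Set.mem_range_self i)

theorem mono_mem_words (α : Fin n → ℕ) : S.mono α ∈ S.words :=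
  S.words.list_prod_mem <| by
    simp only [List.mem_map, List.mem_finRange, true_and, forall_exists_index]
    rintro _ i rfl
    exact pow_mem (S.x_mem_words i) _

def coeffSpan (s : Set R) : AddSubmonoid A :=
  AddSubmonoid.closure (Set.image2 (fun b W => S.ι b * W) s S.words)

variable {S}

theorem ι_mul_mem_coeffSpan {s : Set R} {b : R} (hb : b ∈ s) {W : A} (hW : W ∈ S.words) :
    S.ι b * W ∈ S.coeffSpan s :=
  AddSubmonoid.subset_closure (Set.mem_image2_of_mem hb hW)

theorem coeffSpan_mono {s t : Set R} (h : s ⊆ t) : S.coeffSpan s ≤ S.coeffSpan t :=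
  AddSubmonoid.closure_mono (Set.image2_subset_right h)

theorem eq_zero_of_mem_coeffSpan {s : Set R} (hs : ∀ b ∈ s, b = 0) {y : A}
    (hy : y ∈ S.coeffSpan s) : y = 0 := by
  have hbot : S.coeffSpan s ≤ ⊥ :=
    AddSubmonoid.closure_le.2 <| by
      rintro _ ⟨b, hb, W, -, rfl⟩
      simp [hs b hb]
  simpa using hbot hy

theorem x_mul_mem_coeffSpan {t : Set R} (hσ : ∀ b ∈ t, ∀ i, S.σ i b ∈ t)
    (hδ : ∀ b ∈ t, ∀ i, S.δ i b ∈ t) (i : Fin n) {y : A} (hy : y ∈ S.coeffSpan t) :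
    S.x i * y ∈ S.coeffSpan t := by
  induction hy using AddSubmonoid.closure_induction with
  | mem _ hz =>
    obtain ⟨b, hb, W, hW, rfl⟩ := hz
    rw [← mul_assoc, S.comm, add_mul, mul_assoc]
    exact add_mem
      (ι_mul_mem_coeffSpan (hσ b hb i) (mul_mem (S.x_mem_words i) hW))
      (ι_mul_mem_coeffSpan (hδ b hb i) hW)
  | zero => simp
  | add _ _ _ _ h₁ h₂ => rw [mul_add]; exact add_mem h₁ h₂

theorem mul_mem_coeffSpan_of_mem_words {t : Set R} (hσ : ∀ b ∈ t, ∀ i, S.σ i b ∈ t)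
    (hδ : ∀ b ∈ t, ∀ i, S.δ i b ∈ t) {W : A} (hW : W ∈ S.words) {y : A}
    (hy : y ∈ S.coeffSpan t) : W * y ∈ S.coeffSpan t := by
  induction hW using Submonoid.closure_induction generalizing y with
  | mem _ hx =>
    obtain ⟨i, rfl⟩ := hx
    exact x_mul_mem_coeffSpan hσ hδ i hy
  | one => rwa [one_mul]
  | mul _ _ _ _ h₁ h₂ => rw [mul_assoc]; exact h₁ (h₂ hy)

theorem ι_mul_mem_coeffSpan_mul {s t : Set R} {b : R} (hb : b ∈ s) {y : A}
    (hy : y ∈ S.coeffSpan t) : S.ι b * y ∈ S.coeffSpan (s * t) := by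
  induction hy using AddSubmonoid.closure_induction with
  | mem _ hz =>
    obtain ⟨c, hc, W, hW, rfl⟩ := hz
    rw [← mul_assoc, ← map_mul]
    exact ι_mul_mem_coeffSpan (Set.mul_mem_mul hb hc) hW
  | zero => simp
  | add _ _ _ _ h₁ h₂ => rw [mul_add]; exact add_mem h₁ h₂

theorem mul_mem_coeffSpan {s t : Set R} (hσ : ∀ b ∈ t, ∀ i, S.σ i b ∈ t)
    (hδ : ∀ b ∈ t, ∀ i, S.δ i b ∈ t) {y z : A} (hy : y ∈ S.coeffSpan s)
    (hz : z ∈ S.coeffSpan t) : y * z ∈ S.coeffSpan (s * t) := by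
  induction hy using AddSubmonoid.closure_induction with
  | mem _ hy =>
    obtain ⟨b, hb, W, hW, rfl⟩ := hy
    rw [mul_assoc]
    exact ι_mul_mem_coeffSpan_mul hb (mul_mem_coeffSpan_of_mem_words hσ hδ hW hz)
  | zero => simp
  | add _ _ _ _ h₁ h₂ => rw [add_mul]; exact add_mem h₁ h₂

variable (S)

def wordCoeffs {ι : Type*} (a : ι → R) (N : ℕ) : Set R :=
  ⋃ (l : List ι) (_ : l.length = N), (l.map fun i => S.orbit (a i)).prod

theorem sum_pow_mem_coeffSpan {ι : Type*} [Fintype ι] (a : ι → R) (X : ι → Fin n → ℕ)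
    (N : ℕ) : (∑ i, S.ι (a i) * S.mono (X i)) ^ N ∈ S.coeffSpan (S.wordCoeffs a N) := by
  induction N with
  | zero =>
    have hone : (1 : R) ∈ S.wordCoeffs a 0 := Set.mem_iUnion₂.2 ⟨[], rfl, by simp⟩
    simpa using ι_mul_mem_coeffSpan hone (one_mem S.words)
  | succ N ih =>
    rw [pow_succ, Finset.mul_sum]
    refine sum_mem fun i _ => ?_
    have hterm := mul_mem_coeffSpan (fun _ hb => S.σ_mem_orbit (a := a i) hb)
      (fun _ hb => S.δ_mem_orbit (a := a i) hb) ih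
      (ι_mul_mem_coeffSpan (S.mem_orbit_self (a i)) (S.mono_mem_words (X i)))
    refine coeffSpan_mono ?_ hterm
    rintro _ ⟨w, hw, c, hc, rfl⟩
    obtain ⟨l, hl, hw⟩ := Set.mem_iUnion₂.1 hw
    exact Set.mem_iUnion₂.2 ⟨l ++ [i], by simp [hl], by simpa using Set.mul_mem_mul hw hc⟩

variable {S}

theorem SigmaDeltaCompatible.mul_eq_zero_of_mem_orbit (hS : S.SigmaDeltaCompatible)
    {u a b : R} (hu : u * a = 0) (hb : b ∈ S.orbit a) : u * b = 0 := by
  induction hb with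
  | refl => exact hu
  | tail _ hstep ih =>
    obtain ⟨i, rfl | rfl⟩ := hstep
    · simpa [sigmaPow, iterPow_single] using (hS.1 u _ (Pi.single i 1)).2 ih
    · simpa [deltaPow, iterPow_single] using hS.2 u _ ih (Pi.single i 1)

theorem mul_mul_pow_eq_zero_of_mem_orbit (hR : IsReversible R) (hS : S.SigmaDeltaCompatible)
    {u a c : R} {s : ℕ} (hu : u * a ^ (s + 1) = 0) (hc : c ∈ S.orbit a) :
    u * c * a ^ s = 0 := by
  have h₁ : a ^ s * u * a = 0 := by
    rw [mul_assoc]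
    exact hR _ _ (by rwa [mul_assoc, ← pow_succ'])
  have h₂ : a ^ s * u * c = 0 := hS.mul_eq_zero_of_mem_orbit h₁ hc
  exact hR _ _ (by rwa [← mul_assoc])

theorem mul_eq_zero_of_mem_prod_orbit (hR : IsReversible R) (hS : S.SigmaDeltaCompatible)
    {ι : Type*} [DecidableEq ι] (a : ι → R) (i : ι) (l : List ι) {u : R} {s : ℕ}
    (hu : u * a i ^ s = 0) (hs : s ≤ l.count i) {w : R}
    (hw : w ∈ (l.map fun j => S.orbit (a j)).prod) : u * w = 0 := by
  induction l generalizing u s w with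
  | nil =>
    obtain rfl : s = 0 := by simpa using hs
    obtain rfl : w = 1 := by simpa using hw
    simpa using hu
  | cons j l ih =>
    obtain ⟨c, hc, w, hw, rfl⟩ := hw
    rw [← mul_assoc]
    rcases eq_or_ne j i with rfl | hji
    · cases s with
      | zero =>
        obtain rfl : u = 0 := by simpa using hu
        simp
      | succ s =>
        exact ih (mul_mul_pow_eq_zero_of_mem_orbit hR hS hu hc)
          (by simpa using hs) hw
    · exact ih (hR.mul_mul_eq_zero hu c) (by simpa [List.count_cons, hji] using hs) hw

end SkewPBW

theorem skewPBW_nilpotency_index_general {R A : Type*} [Ring R] [Ring A] {n : ℕ}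
    (S : SkewPBW R A n) (hrev : IsReversible R)
    (hcomp : S.SigmaDeltaCompatible)
    (m : ℕ) (a : Fin (m + 1) → R) (X : Fin (m + 1) → Fin n → ℕ)
    (k : ℕ) (ha : ∀ i, a i ^ k = 0) :
    (∑ i, S.ι (a i) * S.mono (X i)) ^ ((m + 1) * k + 1) = 0 := by
  classical
  refine S.eq_zero_of_mem_coeffSpan (fun w hw => ?_) (S.sum_pow_mem_coeffSpan a X _)
  obtain ⟨l, hl, hw⟩ := Set.mem_iUnion₂.1 hw
  obtain ⟨i, hi⟩ := l.exists_lt_count_of_card_mul_lt_length (k := k) (by simp [hl])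
  simpa using S.mul_eq_zero_of_mem_prod_orbit hrev hcomp a i l (u := 1)
    (by simpa using ha i) hi.le hw

/-- Let `A` be a skew PBW extension of a reversible, `(Σ,Δ)`-compatible
ring `R`, with the constants `c_{i,j}` of condition (iv) central in `R`.  If
`f = a₀ + a₁X₁ + ⋯ + aₘXₘ ∈ A` has all coefficients nilpotent in `R` and `k > 0`
satisfies `aᵢ^k = 0` for all `i`, then `f^{(m+1)k+1} = 0` in `A`. -/
theorem skewPBW_nilpotency_index {R A : Type*} [Ring R] [Ring A] {n : ℕ}
    (S : SkewPBW R A n) (hrev : IsReversible R)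
    (hcomp : S.SigmaDeltaCompatible) (hc : S.CCentral)
    (m : ℕ) (a : Fin (m + 1) → R) (X : Fin (m + 1) → Fin n → ℕ)
    (hX : Function.Injective X)
    (k : ℕ) (hk : 0 < k) (ha : ∀ i, a i ^ k = 0) :
    (∑ i, S.ι (a i) * S.mono (X i)) ^ ((m + 1) * k + 1) = 0 :=
  skewPBW_nilpotency_index_general S hrev hcomp m a X k ha
end

section
/- Let A = σ(R)⟨x_1,…,x_n⟩ be a skew PBW extension of a ring R with the elements c_{i,j} of condition (iv) central in R, and suppose R is Σ-compatible and (Σ,Δ)-skew Armendariz. If f = Σ_{i=0}^{m} a_iX_i and g = Σ_{j=0}^{t} b_jY_j are elements of A with fg = 0, then a_i b_j = 0 in R for every 0 ≤ i ≤ m and 0 ≤ j ≤ t. -/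
open scoped BigOperators

/-!
Write `z ≡ u x^γ` when `z - u x^γ` lies in the span of the standard monomials of total degree
`< |γ|`. Applying condition (iv) to both orders of a pair `p < q` and comparing coefficients of
`x_p x_q` shows `c_{q,p} c_{p,q} = 1`; centrality then makes every `c_{p,q}` (`p ≠ q`) a unit.
Induction on the degree gives `x_i x^α ≡ u x^{α+e_i}`, `x^α r ≡ σ^α(r) x^α` and
`x^α x^β ≡ u x^{α+β}` with units `u`. Hence `a x^α · b x^β ≡ a σ^α(b) u x^{α+β}`, and if the
product vanishes, freeness of `A` forces `a σ^α(b) u = 0`, so `a σ^α(b) = 0` and `a b = 0` by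
`Σ`-compatibility. The skew Armendariz property reduces `fg = 0` to exactly these products.
-/

theorem List.prod_map_finRange_pow_add_single {M : Type*} [Monoid M] {n : ℕ} (y : Fin n → M)
    (α : Fin n → ℕ) (i : Fin n) (hα : ∀ k < i, α k = 0) :
    ((finRange n).map fun k => y k ^ (α + Pi.single i 1 : Fin n → ℕ) k).prod
      = y i * ((finRange n).map fun k => y k ^ α k).prod := by
  induction n with
  | zero => exact i.elim0
  | succ n ih =>
    simp only [List.finRange_succ, List.map_cons, List.prod_cons, List.map_map]
    cases i using Fin.cases with
    | zero => simp [pow_succ', mul_assoc, Function.comp_def, Pi.single_apply, Fin.succ_ne_zero]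
    | succ i =>
      have := ih (y ∘ Fin.succ) (α ∘ Fin.succ) i
        (fun k hk => hα k.succ (Fin.succ_lt_succ_iff.2 hk))
      simp only [Function.comp_def, Pi.add_apply, Pi.single_apply] at this ⊢
      simp [hα 0 (Fin.succ_pos i), (Fin.succ_ne_zero i).symm, this]

theorem Pi.exists_eq_add_single_of_ne_zero {n : ℕ} {α : Fin n → ℕ} (hα : α ≠ 0) :
    ∃ j, ∃ α' : Fin n → ℕ, α = α' + Pi.single j 1 ∧ ∀ k < j, α' k = 0 := by
  obtain ⟨k, hk⟩ := Function.ne_iff.1 hα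
  obtain ⟨j, hj, hmin⟩ :=
    (Finset.univ.filter (α · ≠ 0)).exists_min_image id ⟨k, by simpa using hk⟩
  simp only [Finset.mem_filter, Finset.mem_univ, true_and, id] at hj hmin
  refine ⟨j, α - Pi.single j 1, ?_, fun k hk => ?_⟩
  · ext k
    rcases eq_or_ne k j with rfl | hkj
    · simp only [Pi.add_apply, Pi.sub_apply, Pi.single_eq_same]
      omega
    · simp [hkj]
  · have hαk : α k = 0 := by_contra fun h => (hmin k h).not_gt hk
    simp [hαk]

@[elab_as_elim]
theorem Pi.induction_add_single_min {n : ℕ} {P : (Fin n → ℕ) → Prop} (zero : P 0)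
    (add_single : ∀ j α, (∀ k < j, α k = 0) → P α → P (α + Pi.single j 1))
    (α : Fin n → ℕ) : P α := by
  induction hd : ∑ k, α k generalizing α with
  | zero => rwa [show α = 0 from funext <| by simpa using hd]
  | succ d ih =>
    obtain ⟨j, α', rfl, hmin⟩ := Pi.exists_eq_add_single_of_ne_zero (α := α) (by
      rintro rfl
      simp at hd)
    refine add_single j α' hmin (ih α' ?_)
    simpa [Finset.sum_add_distrib] using hd

namespace SkewPBW

def deg {n : ℕ} (α : Fin n → ℕ) : ℕ := ∑ k, α k

theorem deg_zero {n : ℕ} : deg (0 : Fin n → ℕ) = 0 := by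
  simp [deg]

theorem deg_add {n : ℕ} (α β : Fin n → ℕ) : deg (α + β) = deg α + deg β := by
  simp [deg, Finset.sum_add_distrib]

theorem deg_single {n : ℕ} (i : Fin n) : deg (Pi.single i 1 : Fin n → ℕ) = 1 := by
  rw [deg, Finset.sum_pi_single', if_pos (Finset.mem_univ i)]

theorem deg_add_single {n : ℕ} (α : Fin n → ℕ) (i : Fin n) :
    deg (α + Pi.single i 1) = deg α + 1 := by
  rw [deg_add, deg_single]

variable {R A : Type*} [Ring R] [Ring A] {n : ℕ} (S : SkewPBW R A n)

theorem mono_add_single {α : Fin n → ℕ} {i : Fin n} (hα : ∀ k < i, α k = 0) :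
    S.mono (α + Pi.single i 1) = S.x i * S.mono α :=
  List.prod_map_finRange_pow_add_single _ α i hα

theorem mono_zero : S.mono 0 = 1 := by
  simp [mono]

theorem mono_single (i : Fin n) : S.mono (Pi.single i 1) = S.x i := by
  simpa [mono_zero] using S.mono_add_single (α := 0) (i := i) fun _ _ => rfl

theorem sigmaPow_zero (r : R) : S.sigmaPow 0 r = r := by
  simp only [sigmaPow, iterPow, Pi.zero_apply, Function.iterate_zero, List.map_const',
    List.length_finRange]
  change (List.replicate n (1 : Function.End R)).prod r = r
  rw [List.prod_replicate, one_pow]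
  rfl

theorem sigmaPow_add_single {α : Fin n → ℕ} {i : Fin n} (hα : ∀ k < i, α k = 0) (r : R) :
    S.sigmaPow (α + Pi.single i 1) r = S.σ i (S.sigmaPow α r) :=
  congrFun (List.prod_map_finRange_pow_add_single (M := Function.End R)
    (fun k => show Function.End R from ⇑(S.σ k)) α i hα) r

def degreeLT (d : ℕ) : AddSubgroup A :=
  AddSubgroup.closure {z | ∃ r γ, deg γ < d ∧ S.ι r * S.mono γ = z}

theorem ι_mul_mono_mem_degreeLT (r : R) {γ : Fin n → ℕ} {d : ℕ} (h : deg γ < d) :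
    S.ι r * S.mono γ ∈ S.degreeLT d :=
  AddSubgroup.subset_closure ⟨r, γ, h, rfl⟩

theorem mono_mem_degreeLT {γ : Fin n → ℕ} {d : ℕ} (h : deg γ < d) :
    S.mono γ ∈ S.degreeLT d := by
  simpa using S.ι_mul_mono_mem_degreeLT 1 h

theorem degreeLT_mono : Monotone S.degreeLT := fun _ _ hde =>
  AddSubgroup.closure_mono fun _ ⟨r, γ, hγ, hz⟩ => ⟨r, γ, hγ.trans_le hde, hz⟩

theorem map_mem_degreeLT (f : A →+ A) {d e : ℕ}
    (hf : ∀ r γ, deg γ < d → f (S.ι r * S.mono γ) ∈ S.degreeLT e) {z : A}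
    (hz : z ∈ S.degreeLT d) : f z ∈ S.degreeLT e :=
  (AddSubgroup.closure_le ((S.degreeLT e).comap f)).2
    (by rintro _ ⟨r, γ, hγ, rfl⟩; exact hf r γ hγ) hz

theorem ι_mul_mem_degreeLT (r : R) {d : ℕ} {z : A} (hz : z ∈ S.degreeLT d) :
    S.ι r * z ∈ S.degreeLT d :=
  S.map_mem_degreeLT (AddMonoidHom.mulLeft (S.ι r)) (fun s _ hγ => by
    simpa only [AddMonoidHom.coe_mulLeft, ← mul_assoc, ← map_mul] using
      S.ι_mul_mono_mem_degreeLT (r * s) hγ) hz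

noncomputable def ofCoeffs : ((Fin n → ℕ) →₀ R) →+ A :=
  Finsupp.liftAddHom fun γ => (AddMonoidHom.mulRight (S.mono γ)).comp S.ι.toAddMonoidHom

theorem ofCoeffs_single (γ : Fin n → ℕ) (r : R) :
    S.ofCoeffs (Finsupp.single γ r) = S.ι r * S.mono γ :=
  Finsupp.liftAddHom_apply_single _ γ r

theorem ofCoeffs_injective : Function.Injective S.ofCoeffs :=
  S.free.injective

theorem degreeLT_le_map_ofCoeffs (d : ℕ) :
    S.degreeLT d ≤ (Finsupp.supported R R {γ | deg γ < d}).toAddSubgroup.map S.ofCoeffs :=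
  (AddSubgroup.closure_le _).2 <| by
    rintro _ ⟨r, γ, hγ, rfl⟩
    exact ⟨Finsupp.single γ r, Finsupp.single_mem_supported R r hγ,
      S.ofCoeffs_single γ r⟩

theorem eq_zero_of_ι_mul_mono_mem_degreeLT {u : R} {γ : Fin n → ℕ}
    (h : S.ι u * S.mono γ ∈ S.degreeLT (deg γ)) : u = 0 := by
  obtain ⟨c, hc, hcz⟩ := S.degreeLT_le_map_ofCoeffs _ h
  obtain rfl : c = Finsupp.single γ u :=
    S.ofCoeffs_injective (hcz.trans (S.ofCoeffs_single γ u).symm)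
  simpa using (Finsupp.mem_supported' R _).1 hc γ (lt_irrefl (deg γ))

def HasLeadingTerm (z : A) (u : R) (γ : Fin n → ℕ) : Prop :=
  z - S.ι u * S.mono γ ∈ S.degreeLT (deg γ)

variable {S}

theorem hasLeadingTerm_mono (γ : Fin n → ℕ) : S.HasLeadingTerm (S.mono γ) 1 γ := by
  rw [HasLeadingTerm, map_one, one_mul, sub_self]
  exact zero_mem _

theorem hasLeadingTerm_x_mul_mono_of_forall_lt {α : Fin n → ℕ} {j : Fin n}
    (hα : ∀ k < j, α k = 0) : S.HasLeadingTerm (S.x j * S.mono α) 1 (α + Pi.single j 1) := by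
  rw [← S.mono_add_single hα]
  exact hasLeadingTerm_mono _

theorem HasLeadingTerm.eq_zero_of_zero {u : R} {γ : Fin n → ℕ} (h : S.HasLeadingTerm 0 u γ) :
    u = 0 :=
  S.eq_zero_of_ι_mul_mono_mem_degreeLT (by simpa [HasLeadingTerm] using h)

theorem HasLeadingTerm.mem_degreeLT {z : A} {u : R} {γ : Fin n → ℕ}
    (h : S.HasLeadingTerm z u γ) : z ∈ S.degreeLT (deg γ + 1) := by
  rw [← sub_add_cancel z (S.ι u * S.mono γ)]
  exact add_mem (S.degreeLT_mono (Nat.le_succ _) h)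
    (S.ι_mul_mono_mem_degreeLT u (Nat.lt_succ_self _))

theorem HasLeadingTerm.add_mem_degreeLT {z w : A} {u : R} {γ : Fin n → ℕ}
    (h : S.HasLeadingTerm z u γ) (hw : w ∈ S.degreeLT (deg γ)) :
    S.HasLeadingTerm (z + w) u γ := by
  rw [HasLeadingTerm, add_sub_right_comm]
  exact add_mem h hw

theorem HasLeadingTerm.ι_mul {z : A} {u : R} {γ : Fin n → ℕ} (h : S.HasLeadingTerm z u γ)
    (r : R) : S.HasLeadingTerm (S.ι r * z) (r * u) γ := by
  rw [HasLeadingTerm, map_mul, mul_assoc, ← mul_sub]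
  exact S.ι_mul_mem_degreeLT r h

theorem HasLeadingTerm.x_mul {z : A} {u v : R} {β : Fin n → ℕ} {j : Fin n}
    (h : S.HasLeadingTerm z u β)
    (hx : ∀ w ∈ S.degreeLT (deg β), S.x j * w ∈ S.degreeLT (deg β + 1))
    (hv : S.HasLeadingTerm (S.x j * S.mono β) v (β + Pi.single j 1)) :
    S.HasLeadingTerm (S.x j * z) (S.σ j u * v) (β + Pi.single j 1) := by
  have key : S.x j * z - S.ι (S.σ j u * v) * S.mono (β + Pi.single j 1) =
      S.ι (S.σ j u) * (S.x j * S.mono β - S.ι v * S.mono (β + Pi.single j 1)) +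
        S.ι (S.δ j u) * S.mono β + S.x j * (z - S.ι u * S.mono β) := by
    rw [mul_sub (S.x j) z, ← mul_assoc (S.x j) (S.ι u), S.comm, map_mul]
    noncomm_ring
  rw [HasLeadingTerm, deg_add_single] at hv ⊢
  rw [key]
  exact add_mem (add_mem (S.ι_mul_mem_degreeLT _ hv)
    (S.ι_mul_mono_mem_degreeLT _ (Nat.lt_succ_self _))) (hx _ h)

variable (S)

theorem quad_mul_mono_mem_degreeLT (i j : Fin n) (β : Fin n → ℕ)
    (hx : ∀ k, S.x k * S.mono β ∈ S.degreeLT (deg β + 2)) :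
    (S.x j * S.x i - S.ι (S.c i j) * (S.x i * S.x j)) * S.mono β ∈ S.degreeLT (deg β + 2) := by
  obtain ⟨r₀, r, h⟩ := S.quad i j
  rw [h, add_mul, Finset.sum_mul]
  refine add_mem (S.ι_mul_mono_mem_degreeLT _ (by omega)) (sum_mem fun k _ => ?_)
  rw [mul_assoc]
  exact S.ι_mul_mem_degreeLT _ (hx k)

theorem quad_mem_degreeLT (i j : Fin n) :
    S.x j * S.x i - S.ι (S.c i j) * (S.x i * S.x j) ∈ S.degreeLT 2 := by
  have hx (k : Fin n) : S.x k * S.mono 0 ∈ S.degreeLT (deg (0 : Fin n → ℕ) + 2) := by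
    rw [S.mono_zero, mul_one, ← S.mono_single]
    exact S.mono_mem_degreeLT (by rw [deg_single, deg_zero]; omega)
  simpa [mono_zero, deg_zero] using S.quad_mul_mono_mem_degreeLT i j 0 hx

theorem c_mul_c_eq_one {p q : Fin n} (hpq : p < q) : S.c q p * S.c p q = 1 := by
  set γ : Fin n → ℕ := Pi.single q 1 + Pi.single p 1
  have hγ : S.mono γ = S.x p * S.x q := by
    rw [S.mono_add_single fun k hk => Pi.single_eq_of_ne (hk.trans hpq).ne 1,
      S.mono_single]
  have hdeg : deg γ = 2 := by rw [deg_add, deg_single, deg_single]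
  have h : S.ι (1 - S.c q p * S.c p q) * S.mono γ ∈ S.degreeLT (deg γ) := by
    have key : S.ι (1 - S.c q p * S.c p q) * S.mono γ =
        (S.x p * S.x q - S.ι (S.c q p) * (S.x q * S.x p)) +
          S.ι (S.c q p) * (S.x q * S.x p - S.ι (S.c p q) * (S.x p * S.x q)) := by
      rw [hγ, map_sub, map_one, map_mul]
      noncomm_ring
    rw [key, hdeg]
    exact add_mem (S.quad_mem_degreeLT q p) (S.ι_mul_mem_degreeLT _ (S.quad_mem_degreeLT p q))
  exact (sub_eq_zero.1 (S.eq_zero_of_ι_mul_mono_mem_degreeLT h)).symm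

theorem isUnit_c (hc : S.CCentral) {p q : Fin n} (hpq : p ≠ q) : IsUnit (S.c p q) := by
  rcases hpq.lt_or_gt with h | h
  · have h' := S.c_mul_c_eq_one h
    exact ⟨⟨_, _, (hc q p _).symm.trans h', h'⟩, rfl⟩
  · have h' := S.c_mul_c_eq_one h
    exact ⟨⟨_, _, h', (hc p q _).symm.trans h'⟩, rfl⟩

theorem x_mul_mem_degreeLT_of {d : ℕ}
    (h : ∀ β, deg β < d → ∀ k, S.x k * S.mono β ∈ S.degreeLT (deg β + 2)) {z : A}
    (hz : z ∈ S.degreeLT d) (k : Fin n) : S.x k * z ∈ S.degreeLT (d + 1) := by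
  refine S.map_mem_degreeLT (AddMonoidHom.mulLeft (S.x k)) (fun r β hβ => ?_) hz
  rw [AddMonoidHom.coe_mulLeft, ← mul_assoc, S.comm, add_mul, mul_assoc]
  exact add_mem (S.ι_mul_mem_degreeLT _ (S.degreeLT_mono (by omega) (h β hβ k)))
    (S.ι_mul_mono_mem_degreeLT _ (by omega))

theorem exists_hasLeadingTerm_x_mul_mono (hc : S.CCentral) (α : Fin n → ℕ) (i : Fin n) :
    ∃ u, IsUnit u ∧ S.HasLeadingTerm (S.x i * S.mono α) u (α + Pi.single i 1) := by
  induction hd : deg α using Nat.strong_induction_on generalizing α i with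
  | _ d ih =>
    rcases eq_or_ne α 0 with rfl | hα
    · refine ⟨1, isUnit_one, ?_⟩
      simpa [S.mono_zero, S.mono_single] using hasLeadingTerm_mono (S := S) (Pi.single i 1)
    obtain ⟨j, α, rfl, hmin⟩ := Pi.exists_eq_add_single_of_ne_zero hα
    rw [deg_add_single] at hd
    rcases le_or_gt i j with hij | hji
    · refine ⟨1, isUnit_one, hasLeadingTerm_x_mul_mono_of_forall_lt fun k hk => ?_⟩
      simp [hmin k (hk.trans_le hij), Pi.single_eq_of_ne (hk.trans_le hij).ne]
    -- Here `j < i`: rewrite `x_i x_j` by condition (iv), then recurse on `α`.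
    have hx (β : Fin n → ℕ) (hβ : deg β < d) (k : Fin n) :
        S.x k * S.mono β ∈ S.degreeLT (deg β + 2) := by
      obtain ⟨u, -, hu⟩ := ih _ hβ β k rfl
      simpa [deg_add_single] using hu.mem_degreeLT
    obtain ⟨u, hu, hlead⟩ := ih _ (by omega) α i rfl
    have hmin' : ∀ k < j, (α + Pi.single i 1 : Fin n → ℕ) k = 0 := fun k hk => by
      simp [hmin k hk, Pi.single_eq_of_ne (hk.trans hji).ne]
    have hxj : S.HasLeadingTerm (S.x j * (S.x i * S.mono α)) (S.σ j u * 1)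
        (α + Pi.single i 1 + Pi.single j 1) :=
      hlead.x_mul (fun w hw => by
        rw [deg_add_single, hd] at hw ⊢
        exact S.x_mul_mem_degreeLT_of hx hw j)
        (hasLeadingTerm_x_mul_mono_of_forall_lt hmin')
    refine ⟨S.c j i * (S.σ j u * 1),
      (S.isUnit_c hc hji.ne).mul ((hu.map _).mul isUnit_one), ?_⟩
    have hsplit : S.x i * S.mono (α + Pi.single j 1) =
        S.ι (S.c j i) * (S.x j * (S.x i * S.mono α)) +
          (S.x i * S.x j - S.ι (S.c j i) * (S.x j * S.x i)) * S.mono α := by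
      rw [S.mono_add_single hmin]
      noncomm_ring
    rw [hsplit, add_right_comm]
    refine (hxj.ι_mul _).add_mem_degreeLT ?_
    rw [deg_add_single, deg_add_single]
    exact S.quad_mul_mono_mem_degreeLT j i α (hx α (by omega))

theorem x_mul_mem_degreeLT (hc : S.CCentral) {d : ℕ} {z : A} (hz : z ∈ S.degreeLT d)
    (k : Fin n) : S.x k * z ∈ S.degreeLT (d + 1) :=
  S.x_mul_mem_degreeLT_of (fun β _ k => by
    obtain ⟨u, -, hu⟩ := S.exists_hasLeadingTerm_x_mul_mono hc β k
    simpa [deg_add_single] using hu.mem_degreeLT) hz k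

theorem hasLeadingTerm_mono_mul_ι (hc : S.CCentral) (α : Fin n → ℕ) (r : R) :
    S.HasLeadingTerm (S.mono α * S.ι r) (S.sigmaPow α r) α := by
  induction α using Pi.induction_add_single_min with
  | zero =>
    rw [HasLeadingTerm, S.mono_zero, S.sigmaPow_zero, one_mul, mul_one, sub_self]
    exact zero_mem _
  | add_single j α hmin ih =>
    rw [S.mono_add_single hmin, mul_assoc, S.sigmaPow_add_single hmin, ← mul_one (S.σ j _)]
    exact ih.x_mul (fun w hw => S.x_mul_mem_degreeLT hc hw j)
      (hasLeadingTerm_x_mul_mono_of_forall_lt hmin)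

theorem exists_hasLeadingTerm_mono_mul_mono (hc : S.CCentral) (α β : Fin n → ℕ) :
    ∃ u, IsUnit u ∧ S.HasLeadingTerm (S.mono α * S.mono β) u (α + β) := by
  induction α using Pi.induction_add_single_min with
  | zero => exact ⟨1, isUnit_one, by simpa [S.mono_zero] using hasLeadingTerm_mono β⟩
  | add_single j α hmin ih =>
    obtain ⟨u, hu, hlead⟩ := ih
    obtain ⟨v, hv, hxlead⟩ := S.exists_hasLeadingTerm_x_mul_mono hc (α + β) j
    refine ⟨S.σ j u * v, (hu.map _).mul hv, ?_⟩
    rw [S.mono_add_single hmin, mul_assoc, add_right_comm]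
    exact hlead.x_mul (fun w hw => S.x_mul_mem_degreeLT hc hw j) hxlead

theorem mul_mono_mem_degreeLT (hc : S.CCentral) {d : ℕ} {z : A} (hz : z ∈ S.degreeLT d)
    (β : Fin n → ℕ) : z * S.mono β ∈ S.degreeLT (d + deg β) := by
  refine S.map_mem_degreeLT (AddMonoidHom.mulRight (S.mono β)) (fun r γ hγ => ?_) hz
  obtain ⟨u, -, hu⟩ := S.exists_hasLeadingTerm_mono_mul_mono hc γ β
  change S.ι r * S.mono γ * S.mono β ∈ _
  rw [mul_assoc]
  refine S.ι_mul_mem_degreeLT r (S.degreeLT_mono ?_ hu.mem_degreeLT)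
  rw [deg_add]
  omega

variable {S} in
theorem HasLeadingTerm.mul_mono (hc : S.CCentral) {z : A} {u : R} {α : Fin n → ℕ}
    (h : S.HasLeadingTerm z u α) (β : Fin n → ℕ) :
    ∃ v, IsUnit v ∧ S.HasLeadingTerm (z * S.mono β) (u * v) (α + β) := by
  obtain ⟨v, hv, hlead⟩ := S.exists_hasLeadingTerm_mono_mul_mono hc α β
  refine ⟨v, hv, ?_⟩
  have key : z * S.mono β - S.ι (u * v) * S.mono (α + β) =
      S.ι u * (S.mono α * S.mono β - S.ι v * S.mono (α + β)) +
        (z - S.ι u * S.mono α) * S.mono β := by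
    rw [map_mul]
    noncomm_ring
  rw [HasLeadingTerm, key]
  refine add_mem (S.ι_mul_mem_degreeLT u hlead) ?_
  rw [deg_add]
  exact S.mul_mono_mem_degreeLT hc h β

theorem mul_eq_zero_of_ι_mul_mono_mul_eq_zero (hc : S.CCentral) (hSig : S.SigmaCompatible)
    {a b : R} {α β : Fin n → ℕ} (h : S.ι a * S.mono α * (S.ι b * S.mono β) = 0) :
    a * b = 0 := by
  obtain ⟨v, hv, hlead⟩ := (S.hasLeadingTerm_mono_mul_ι hc α b).mul_mono hc β
  have h0 : S.HasLeadingTerm 0 (a * (S.sigmaPow α b * v)) (α + β) := by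
    rw [← h, mul_assoc, ← mul_assoc (S.mono α)]
    exact hlead.ι_mul a
  rw [← hSig a b α, ← hv.mul_left_eq_zero, mul_assoc]
  exact h0.eq_zero_of_zero

end SkewPBW

/-- Let `A` be a skew PBW extension of `R` with the constants `c_{i,j}`
of condition (iv) central in `R`, where `R` is `Σ`-compatible and `(Σ,Δ)`-skew
Armendariz.  If `f = Σᵢ aᵢXᵢ` and `g = Σⱼ bⱼYⱼ` in `A` satisfy `fg = 0`,
then `aᵢ bⱼ = 0` in `R` for all `i, j`. -/
theorem sdSkewArmendariz_coeff_mul_eq_zero {R A : Type*} [Ring R] [Ring A] {n : ℕ}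
    (S : SkewPBW R A n) (hc : S.CCentral)
    (hSig : S.SigmaCompatible) (hArm : S.SDSkewArmendariz)
    (m t : ℕ) (a : Fin (m + 1) → R) (X : Fin (m + 1) → Fin n → ℕ)
    (b : Fin (t + 1) → R) (Y : Fin (t + 1) → Fin n → ℕ)
    (hX : Function.Injective X) (hY : Function.Injective Y)
    (hfg : (∑ i, S.ι (a i) * S.mono (X i)) * (∑ j, S.ι (b j) * S.mono (Y j)) = 0) :
    ∀ i j, a i * b j = 0 := fun i j =>
  S.mul_eq_zero_of_ι_mul_mono_mul_eq_zero hc hSig (hArm m t a X b Y hX hY hfg i j)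
end

section
/- Let A = σ(R)⟨x_1,…,x_n⟩ be a skew PBW extension of a ring R with the elements c_{i,j} of condition (iv) central in R. If R is Σ-compatible and Σ-skew Armendariz, then R is skew Π-Armendariz with respect to A. -/
open scoped BigOperators

/-!
Σ-compatibility turns the conclusion `aᵤ σ^{Xᵤ}(b) = 0` of the Σ-skew Armendariz property into
`aᵤ b = 0`, so whenever `f w = 0` every coefficient of `f` annihilates every coefficient of `w`,
i.e. `aᵤ w = 0`: coefficients can be peeled off the left of a vanishing product. If
`c (fg)^(k+1) = c f · g (fg)^k = 0`, peeling `aᵢ` and then `bⱼ` gives `c aᵢ bⱼ (fg)^k = 0`,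
and induction on `k` yields `c (aᵢ bⱼ)^k = 0`; take `c = 1`.
-/

namespace SkewPBW

variable {R A : Type*} [Ring R] [Ring A] {n : ℕ} (S : SkewPBW R A n)

theorem exists_eq_sum_mono (w : A) :
    ∃ (s : ℕ) (b : Fin (s + 1) → R) (Y : Fin (s + 1) → Fin n → ℕ),
      Function.Injective Y ∧ w = ∑ j, S.ι (b j) * S.mono (Y j) := by
  obtain ⟨c, rfl⟩ := S.free.2 w
  -- `0` is added to the support so that the index type is never empty.
  set T := insert 0 c.support
  obtain ⟨s, hs⟩ := Nat.exists_eq_succ_of_ne_zero (Finset.insert_nonempty 0 c.support).card_ne_zero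
  let e : Fin (s + 1) ≃ T := (finCongr hs.symm).trans T.equivFin.symm
  refine ⟨s, fun j => c (e j), fun j => e j, fun _ _ h => e.injective (Subtype.ext h), ?_⟩
  change (c.sum fun α r => S.ι r * S.mono α) = _
  rw [Finsupp.sum_of_support_subset c (Finset.subset_insert 0 c.support) _ (by simp),
    ← Finset.sum_coe_sort T]
  exact (Fintype.sum_equiv e _ _ fun _ => rfl).symm

theorem ι_mul_sum_mono {m : ℕ} (c : R) (a : Fin m → R) (X : Fin m → Fin n → ℕ) :
    S.ι c * ∑ u, S.ι (a u) * S.mono (X u) = ∑ u, S.ι (c * a u) * S.mono (X u) := by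
  simp only [Finset.mul_sum, map_mul, mul_assoc]

variable {S}

theorem ι_coeff_mul_eq_zero (hSig : S.SigmaCompatible) (hArm : S.SigmaSkewArmendariz)
    {m : ℕ} {a : Fin (m + 1) → R} {X : Fin (m + 1) → Fin n → ℕ} (hX : Function.Injective X)
    {w : A} (h : (∑ u, S.ι (a u) * S.mono (X u)) * w = 0) (u : Fin (m + 1)) :
    S.ι (a u) * w = 0 := by
  obtain ⟨s, b, Y, hY, rfl⟩ := S.exists_eq_sum_mono w
  have hab (j : Fin (s + 1)) : a u * b j = 0 :=
    (hSig _ _ _).mp (hArm m s a X b Y hX hY h u j)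
  simp only [Finset.mul_sum, ← mul_assoc, ← map_mul, hab, map_zero, zero_mul,
    Finset.sum_const_zero]

theorem mul_coeff_mul_pow_eq_zero (hSig : S.SigmaCompatible) (hArm : S.SigmaSkewArmendariz)
    {m t : ℕ} {a : Fin (m + 1) → R} {X : Fin (m + 1) → Fin n → ℕ}
    {b : Fin (t + 1) → R} {Y : Fin (t + 1) → Fin n → ℕ}
    (hX : Function.Injective X) (hY : Function.Injective Y) (k : ℕ) (c : R)
    (h : S.ι c * ((∑ i, S.ι (a i) * S.mono (X i)) * (∑ j, S.ι (b j) * S.mono (Y j))) ^ k = 0)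
    (i : Fin (m + 1)) (j : Fin (t + 1)) :
    c * (a i * b j) ^ k = 0 := by
  set f := ∑ i, S.ι (a i) * S.mono (X i)
  set g := ∑ j, S.ι (b j) * S.mono (Y j)
  induction k generalizing c with
  | zero => simpa using (map_eq_zero_iff S.ι S.ι_inj).mp (by simpa using h)
  | succ k ih =>
    have hf : (∑ u, S.ι (c * a u) * S.mono (X u)) * (g * (f * g) ^ k) = 0 := by
      rwa [← S.ι_mul_sum_mono, mul_assoc, ← mul_assoc f, ← pow_succ']
    have hg : (∑ v, S.ι (c * a i * b v) * S.mono (Y v)) * (f * g) ^ k = 0 := by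
      rw [← S.ι_mul_sum_mono, mul_assoc]
      exact ι_coeff_mul_eq_zero hSig hArm hX hf i
    calc c * (a i * b j) ^ (k + 1) = c * a i * b j * (a i * b j) ^ k := by
          rw [pow_succ', ← mul_assoc, ← mul_assoc]
      _ = 0 := ih _ (ι_coeff_mul_eq_zero hSig hArm hY hg j)

end SkewPBW

theorem sigmaSkewArmendariz_skewPiArmendariz_general {R A : Type*} [Ring R] [Ring A] {n : ℕ}
    (S : SkewPBW R A n)
    (hSig : S.SigmaCompatible) (hArm : S.SigmaSkewArmendariz) :
    S.SkewPiArmendariz := by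
  intro m t a X b Y hX hY ⟨k, hk⟩ i j
  exact ⟨k, by simpa using
    SkewPBW.mul_coeff_mul_pow_eq_zero hSig hArm hX hY k 1 (by rw [map_one, one_mul, hk]) i j⟩

/-- Let `A` be a skew PBW extension of `R` with the constants `c_{i,j}`
of condition (iv) central in `R`.  If `R` is `Σ`-compatible and `Σ`-skew Armendariz,
then `R` is skew `Π`-Armendariz with respect to `A`. -/
theorem sigmaSkewArmendariz_skewPiArmendariz {R A : Type*} [Ring R] [Ring A] {n : ℕ}
    (S : SkewPBW R A n) (hc : S.CCentral)
    (hSig : S.SigmaCompatible) (hArm : S.SigmaSkewArmendariz) :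
    S.SkewPiArmendariz :=
  sigmaSkewArmendariz_skewPiArmendariz_general S hSig hArm
end

section
/- Let A = σ(R)⟨x_1,…,x_n⟩ be a skew PBW extension of a ring R with the elements c_{i,j} of condition (iv) central in R, and suppose R is Σ-compatible and Σ-skew Armendariz. If p_1, p_2, …, p_l are elements of A (l ≥ 2) with p_1 p_2 ⋯ p_l = 0, then for every choice of coefficients a_k ∈ C_{p_k} (k = 1, …, l), where C_p denotes the set of coefficients of p in its unique expansion in standard monomials, one has a_1 a_2 ⋯ a_l = 0 in R. -/
open scoped BigOperators

/-!
If `p q = 0` and `a` is a coefficient of `p`, the `Σ`-skew Armendariz property gives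
`a σ^α(b) = 0` for every coefficient `b` of `q`, and `Σ`-compatibility turns this into
`a b = 0`; hence `a q = 0`. Writing `r p₁ ⋯ p_l = 0` as `(r p₁)(p₂ ⋯ p_l) = 0`, where `r p₁`
has coefficients `r aᵢ`, an induction on `l` started at `r = 1` yields `a₁ ⋯ a_l = 0`.
-/

namespace SkewPBW

variable {R A : Type*} [Ring R] [Ring A] {n : ℕ} (S : SkewPBW R A n)

theorem exists_injective_sum_mono_eq (q : A) :
    ∃ (t : ℕ) (b : Fin (t + 1) → R) (Y : Fin (t + 1) → Fin n → ℕ),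
      Function.Injective Y ∧ q = ∑ j, S.ι (b j) * S.mono (Y j) := by
  obtain ⟨c, rfl⟩ := S.free.2 q
  -- padding the support with `0` gives the nonempty index type `Fin (t + 1)` that the
  -- Armendariz conditions quantify over
  set s := insert 0 c.support
  obtain ⟨t, ht⟩ : ∃ t, s.card = t + 1 := Nat.exists_eq_succ_of_ne_zero (by simp [s])
  let e : Fin (t + 1) ≃ s := (finCongr ht.symm).trans s.equivFin.symm
  refine ⟨t, fun j => c (e j), fun j => e j, Subtype.val_injective.comp e.injective, ?_⟩
  calc c.sum (fun α r => S.ι r * S.mono α)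
      = ∑ α ∈ s, S.ι (c α) * S.mono α :=
        Finsupp.sum_of_support_subset _ (Finset.subset_insert _ _) _ (by simp)
    _ = ∑ j, S.ι (c (e j)) * S.mono (e j) := by
        rw [← Finset.sum_coe_sort, ← e.sum_comp]

variable {S}

theorem map_coeff_mul_eq_zero (hSig : S.SigmaCompatible) (hArm : S.SigmaSkewArmendariz)
    {t : ℕ} {a : Fin (t + 1) → R} {X : Fin (t + 1) → Fin n → ℕ} (hX : Function.Injective X)
    {q : A} (h : (∑ i, S.ι (a i) * S.mono (X i)) * q = 0) (i : Fin (t + 1)) :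
    S.ι (a i) * q = 0 := by
  obtain ⟨s, b, Y, hY, rfl⟩ := S.exists_injective_sum_mono_eq q
  have hab : ∀ j, a i * b j = 0 := fun j => (hSig _ _ (X i)).mp (hArm t s a X b Y hX hY h i j)
  rw [Finset.mul_sum]
  exact Finset.sum_eq_zero fun j _ => by rw [← mul_assoc, ← map_mul, hab, map_zero, zero_mul]

theorem mul_prod_coeffs_eq_zero (hSig : S.SigmaCompatible) (hArm : S.SigmaSkewArmendariz)
    {l : ℕ} {m : Fin l → ℕ} {a : ∀ k : Fin l, Fin (m k + 1) → R}
    {X : ∀ k : Fin l, Fin (m k + 1) → Fin n → ℕ} (hX : ∀ k, Function.Injective (X k))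
    {r : R}
    (h : S.ι r * ((List.finRange l).map fun k => ∑ i, S.ι (a k i) * S.mono (X k i)).prod = 0)
    (idx : ∀ k : Fin l, Fin (m k + 1)) :
    r * ((List.finRange l).map fun k => a k (idx k)).prod = 0 := by
  induction l generalizing r with
  | zero => simpa using S.ι_inj (by simpa using h)
  | succ l ih =>
    simp only [List.finRange_succ, List.map_cons, List.map_map, List.prod_cons,
      Function.comp_def] at h ⊢
    have hleft : S.ι r * ∑ i, S.ι (a 0 i) * S.mono (X 0 i)
        = ∑ i, S.ι (r * a 0 i) * S.mono (X 0 i) := by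
      simp only [Finset.mul_sum, map_mul, mul_assoc]
    rw [← mul_assoc, hleft] at h
    rw [← mul_assoc]
    exact ih (fun k => hX k.succ) (map_coeff_mul_eq_zero hSig hArm (hX 0) h (idx 0))
      (fun k => idx k.succ)

end SkewPBW

theorem sigmaSkewArmendariz_prod_coeffs_eq_zero_general {R A : Type*} [Ring R] [Ring A] {n : ℕ}
    (S : SkewPBW R A n)
    (hSig : S.SigmaCompatible) (hArm : S.SigmaSkewArmendariz)
    (l : ℕ) (m : Fin l → ℕ)
    (a : ∀ k : Fin l, Fin (m k + 1) → R)
    (X : ∀ k : Fin l, Fin (m k + 1) → Fin n → ℕ)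
    (hX : ∀ k, Function.Injective (X k))
    (hprod : ((List.finRange l).map fun k => ∑ i, S.ι (a k i) * S.mono (X k i)).prod = 0)
    (idx : ∀ k : Fin l, Fin (m k + 1)) :
    ((List.finRange l).map fun k => a k (idx k)).prod = 0 := by
  simpa using S.mul_prod_coeffs_eq_zero hSig hArm hX (r := 1) (by simpa using hprod) idx

/-- Let `A` be a skew PBW extension of `R` with the constants `c_{i,j}`
of condition (iv) central in `R`, where `R` is `Σ`-compatible and `Σ`-skew Armendariz.
If `p₁ ⋯ p_l = 0` (`l ≥ 2`) in `A`, then for every choice of coefficients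
`aₖ ∈ C_{pₖ}` one has `a₁ a₂ ⋯ a_l = 0` in `R`. -/
theorem sigmaSkewArmendariz_prod_coeffs_eq_zero {R A : Type*} [Ring R] [Ring A] {n : ℕ}
    (S : SkewPBW R A n) (hc : S.CCentral)
    (hSig : S.SigmaCompatible) (hArm : S.SigmaSkewArmendariz)
    (l : ℕ) (hl : 2 ≤ l) (m : Fin l → ℕ)
    (a : ∀ k : Fin l, Fin (m k + 1) → R)
    (X : ∀ k : Fin l, Fin (m k + 1) → Fin n → ℕ)
    (hX : ∀ k, Function.Injective (X k))
    (hprod : ((List.finRange l).map fun k => ∑ i, S.ι (a k i) * S.mono (X k i)).prod = 0)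
    (idx : ∀ k : Fin l, Fin (m k + 1)) :
    ((List.finRange l).map fun k => a k (idx k)).prod = 0 :=
  sigmaSkewArmendariz_prod_coeffs_eq_zero_general S hSig hArm l m a X hX hprod idx
end

section
/- Let R be a ring equipped with a family Σ = {σ_1,…,σ_n} of ring endomorphisms and a family Δ = {δ_1,…,δ_n} of maps with each δ_i a σ_i-derivation, and suppose R is (Σ,Δ)-compatible and reversible. If a, b ∈ R and ab is nilpotent, then a·σ^α(δ^β(b)) and a·δ^β(σ^α(b)) are nilpotent in R for all α, β ∈ ℕ^n. -/
/-!
By (Σ,Δ)-compatibility every left annihilator of `b` also annihilates `σ^α(δ^β(b))` and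
`δ^β(σ^α(b))`. In a reversible ring an inclusion of left annihilators `ann(b) ⊆ ann(c)` upgrades
to `x b y = 0 → x c y = 0`, and replacing the factors `b` of `(ab)^m = 0` by `c` one at a time
then gives `(ac)^m = 0`.
-/

open scoped BigOperators

theorem IsReversible.mul_mul_eq_zero_of_forall_mul_eq_zero {R : Type*} [Ring R]
    (hR : IsReversible R) {b c : R} (hbc : ∀ x, x * b = 0 → x * c = 0) {x y : R}
    (h : x * b * y = 0) : x * c * y = 0 := by
  have hyxb : y * x * b = 0 := by simpa only [mul_assoc] using hR _ _ h
  have hcyx : c * y * x = 0 := by simpa only [mul_assoc] using hR _ _ (hbc _ hyxb)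
  simpa only [mul_assoc] using hR _ _ hcyx

theorem mul_pow_mul_eq_zero_of_forall {M : Type*} [MonoidWithZero M] {a b c : M}
    (hbc : ∀ x y, x * b * y = 0 → x * c * y = 0) (k : ℕ) {x y : M}
    (h : x * (a * b) ^ k * y = 0) : x * (a * c) ^ k * y = 0 := by
  induction k generalizing y with
  | zero => simpa using h
  | succ k ih =>
    have hk : x * (a * c) ^ k * (a * b * y) = 0 := ih (by simpa only [pow_succ, mul_assoc] using h)
    simpa only [pow_succ, mul_assoc] using
      hbc (x * (a * c) ^ k * a) y (by simpa only [mul_assoc] using hk)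

theorem IsNilpotent.mul_of_forall_mul_mul_eq_zero {M : Type*} [MonoidWithZero M] {a b c : M}
    (hab : IsNilpotent (a * b)) (hbc : ∀ x y, x * b * y = 0 → x * c * y = 0) :
    IsNilpotent (a * c) := by
  obtain ⟨m, hm⟩ := hab
  exact ⟨m, by simpa using mul_pow_mul_eq_zero_of_forall hbc m (x := 1) (y := 1) (by simp [hm])⟩

theorem nilpotent_mul_sigma_delta_general {R : Type*} [Ring R] {n : ℕ}
    (σ : Fin n → R →+* R) (δ : Fin n → R → R)
    (hSig : ∀ (a b : R) (α : Fin n → ℕ), a * iterPow (fun i => ⇑(σ i)) α b = 0 ↔ a * b = 0)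
    (hDel : ∀ a b : R, a * b = 0 → ∀ β : Fin n → ℕ, a * iterPow δ β b = 0)
    (hrev : IsReversible R)
    (a b : R) (hab : IsNilpotent (a * b)) (α β : Fin n → ℕ) :
    IsNilpotent (a * iterPow (fun i => ⇑(σ i)) α (iterPow δ β b)) ∧
    IsNilpotent (a * iterPow δ β (iterPow (fun i => ⇑(σ i)) α b)) := by
  have key : ∀ c, (∀ x, x * b = 0 → x * c = 0) → IsNilpotent (a * c) := fun _ hc =>
    hab.mul_of_forall_mul_mul_eq_zero fun _ _ => hrev.mul_mul_eq_zero_of_forall_mul_eq_zero hc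
  exact ⟨key _ fun x hx => (hSig x _ α).mpr (hDel x b hx β),
    key _ fun x hx => hDel x _ ((hSig x b α).mpr hx) β⟩

/-- Let `R` be a ring with endomorphisms `σ₁,…,σₙ` and
`σᵢ`-derivations `δ₁,…,δₙ`, `(Σ,Δ)`-compatible and reversible.  If `ab` is
nilpotent, then `a σ^α(δ^β(b))` and `a δ^β(σ^α(b))` are nilpotent, for all
`α, β ∈ ℕⁿ`. -/
theorem nilpotent_mul_sigma_delta {R : Type*} [Ring R] {n : ℕ}
    (σ : Fin n → R →+* R) (δ : Fin n → R → R)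
    (hδadd : ∀ (i : Fin n) (r s : R), δ i (r + s) = δ i r + δ i s)
    (hδleib : ∀ (i : Fin n) (r s : R), δ i (r * s) = σ i r * δ i s + δ i r * s)
    (hSig : ∀ (a b : R) (α : Fin n → ℕ), a * iterPow (fun i => ⇑(σ i)) α b = 0 ↔ a * b = 0)
    (hDel : ∀ a b : R, a * b = 0 → ∀ β : Fin n → ℕ, a * iterPow δ β b = 0)
    (hrev : IsReversible R)
    (a b : R) (hab : IsNilpotent (a * b)) (α β : Fin n → ℕ) :
    IsNilpotent (a * iterPow (fun i => ⇑(σ i)) α (iterPow δ β b)) ∧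
    IsNilpotent (a * iterPow δ β (iterPow (fun i => ⇑(σ i)) α b)) :=
  nilpotent_mul_sigma_delta_general σ δ hSig hDel hrev a b hab α β
end

section
/- Let R be a ring equipped with a family Σ = {σ_1,…,σ_n} of ring endomorphisms and a family Δ = {δ_1,…,δ_n} of maps with each δ_i a σ_i-derivation, and suppose R is (Σ,Δ)-compatible. If a, b ∈ R and a·σ^θ(b) is nilpotent for some θ ∈ ℕ^n, then ab is nilpotent in R. -/
theorem iterPow_ringHom_eq {R : Type*} [NonAssocSemiring R] {n : ℕ} (σ : Fin n → R →+* R)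
    (θ : Fin n → ℕ) :
    iterPow (fun i => ⇑(σ i)) θ = ⇑((List.finRange n).map fun i => σ i ^ θ i).prod := by
  unfold iterPow
  induction List.finRange n with
  | nil => rfl
  | cons i l ih => simp only [List.map_cons, List.foldr_cons, List.prod_cons, ih,
      RingHom.coe_mul, RingHom.coe_pow]

section Compatible

variable {M F : Type*} [MonoidWithZero M] [FunLike F M M] [MonoidHomClass F M M]
  {σ : F} (hσ : ∀ c d : M, c * σ d = 0 ↔ c * d = 0)
include hσ

theorem mul_mul_eq_zero_of_mul_map_mul_eq_zero {x y a b : M}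
    (h : x * (a * σ b) * y = 0) : x * (a * b) * y = 0 := by
  have h' : x * a * σ (b * y) = 0 := by
    rw [map_mul, ← mul_assoc, (hσ _ y).2 (by simpa only [mul_assoc] using h)]
  simpa only [mul_assoc] using (hσ _ _).1 h'

theorem pow_mul_pow_eq_zero_of_pow_eq_zero {a b : M} :
    ∀ (k j : ℕ), (a * σ b) ^ (j + k) = 0 → (a * σ b) ^ j * (a * b) ^ k = 0
  | 0, j, h => by simpa using h
  | k + 1, j, h => by
    have ih := pow_mul_pow_eq_zero_of_pow_eq_zero k (j + 1) (by rwa [add_right_comm])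
    rw [pow_succ] at ih
    rw [pow_succ', ← mul_assoc]
    exact mul_mul_eq_zero_of_mul_map_mul_eq_zero hσ ih

theorem IsNilpotent.mul_of_mul_map {a b : M} (h : IsNilpotent (a * σ b)) :
    IsNilpotent (a * b) := by
  obtain ⟨m, hm⟩ := h
  exact ⟨m, by simpa using pow_mul_pow_eq_zero_of_pow_eq_zero hσ m 0 (by simpa using hm)⟩

end Compatible

theorem nilpotent_of_mul_sigma_nilpotent_general {R : Type*} [Ring R] {n : ℕ}
    (σ : Fin n → R →+* R)
    (hSig : ∀ (a b : R) (α : Fin n → ℕ), a * iterPow (fun i => ⇑(σ i)) α b = 0 ↔ a * b = 0)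
    (a b : R) (θ : Fin n → ℕ)
    (h : IsNilpotent (a * iterPow (fun i => ⇑(σ i)) θ b)) :
    IsNilpotent (a * b) := by
  rw [iterPow_ringHom_eq] at h
  exact h.mul_of_mul_map fun c d => by rw [← iterPow_ringHom_eq]; exact hSig c d θ

/-- Let `R` be a ring with endomorphisms `σ₁,…,σₙ` and
`σᵢ`-derivations `δ₁,…,δₙ`, `(Σ,Δ)`-compatible.  If `a σ^θ(b)` is nilpotent for
some `θ ∈ ℕⁿ`, then `ab` is nilpotent. -/
theorem nilpotent_of_mul_sigma_nilpotent {R : Type*} [Ring R] {n : ℕ}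
    (σ : Fin n → R →+* R) (δ : Fin n → R → R)
    (hδadd : ∀ (i : Fin n) (r s : R), δ i (r + s) = δ i r + δ i s)
    (hδleib : ∀ (i : Fin n) (r s : R), δ i (r * s) = σ i r * δ i s + δ i r * s)
    (hSig : ∀ (a b : R) (α : Fin n → ℕ), a * iterPow (fun i => ⇑(σ i)) α b = 0 ↔ a * b = 0)
    (hDel : ∀ a b : R, a * b = 0 → ∀ β : Fin n → ℕ, a * iterPow δ β b = 0)
    (a b : R) (θ : Fin n → ℕ)
    (h : IsNilpotent (a * iterPow (fun i => ⇑(σ i)) θ b)) :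
    IsNilpotent (a * b) :=
  nilpotent_of_mul_sigma_nilpotent_general σ hSig a b θ h
end
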